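/- Let K = t + L with L ≥ 1. For a valid placement matrix V with P rows, every user k and every (t+1)-subset 𝒱 of [K]: if k ∈ 𝒱, the number of p ∈ Φ(𝒱) with V(p,k) = 0 is at most 1, and Σ_{𝒱 ∋ k, |𝒱|=t+1} #{p ∈ Φ(𝒱) : V(p,k)=0} = P·(K−t)/K = P·L/K. -/
import Mathlib


/-- Let `K = t + L` and `V` a valid placement matrix with `P` rows,
`Φ(𝒱) = {p : V p j = 0 for all j ∉ 𝒱}`. For every user `k`:
(a) for each `(t+1)`-subset `𝒱` with `k ∈ 𝒱`, the number of `p ∈ Φ(𝒱)` with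
`V p k = 0` is at most `1`; and (b) summing this count over all `(t+1)`-subsets
`𝒱` containing `k` gives `P*(K-t)/K = P*L/K` (stated as `K * sum = P * L`). -/
theorem stmt_18 (K t L P : ℕ) (hK : K = t + L) (ht : 0 < t) (hL : 1 ≤ L)
    (V : Fin P → Fin K → ℕ)
    (hbin : ∀ p k, V p k = 0 ∨ V p k = 1)
    (hinj : Function.Injective V)
    (hrow : ∀ p, ∑ k, V p k = t)
    (hcol : ∀ k, K * ∑ p, V p k = P * t) :
    ∀ k : Fin K,
      (∀ 𝒱 : Finset (Fin K), 𝒱.card = t + 1 → k ∈ 𝒱 →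
        (Finset.univ.filter
          (fun p : Fin P => (∀ j ∉ 𝒱, V p j = 0) ∧ V p k = 0)).card ≤ 1) ∧
      K * ∑ 𝒱 ∈ (((Finset.univ : Finset (Fin K)).powersetCard (t + 1)).filter
              (fun 𝒱 => k ∈ 𝒱)),
            (Finset.univ.filter
              (fun p : Fin P => (∀ j ∉ 𝒱, V p j = 0) ∧ V p k = 0)).card
        = P * L := by
  intro k
  set supp : Fin P → Finset (Fin K) :=
    fun p => Finset.univ.filter (fun j => V p j = 1) with hsupp
  have hcard : ∀ p, (supp p).card = t := by
    intro p
    rw [hsupp]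
    rw [Finset.card_filter, ← hrow p]
    apply Finset.sum_congr rfl
    intro j _
    rcases hbin p j with h | h <;> simp [h]
  have hext : ∀ p q, supp p = supp q → p = q := by
    intro p q h
    apply hinj
    funext j
    have hm : V p j = 1 ↔ V q j = 1 := by
      constructor <;> intro hh
      · have h1 : j ∈ supp p := by simp [hsupp, hh]
        rw [h] at h1; simpa [hsupp] using h1
      · have h1 : j ∈ supp q := by simp [hsupp, hh]
        rw [← h] at h1; simpa [hsupp] using h1
    rcases hbin p j with h1 | h1 <;> rcases hbin q j with h2 | h2 <;>
      simp [h1, h2] at hm ⊢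
  have hPhi : ∀ p (𝒱 : Finset (Fin K)), (∀ j ∉ 𝒱, V p j = 0) ↔ supp p ⊆ 𝒱 := by
    intro p 𝒱
    constructor
    · intro h j hj
      simp only [hsupp, Finset.mem_filter, Finset.mem_univ, true_and] at hj
      by_contra hc
      have := h j hc
      omega
    · intro h j hj
      rcases hbin p j with h1 | h1
      · exact h1
      · exact absurd (h (by simp [hsupp, h1])) hj
  have hksupp : ∀ p, V p k = 0 → k ∉ supp p := by
    intro p hp
    simp [hsupp, hp]
  constructor
  · intro 𝒱 hVc hk
    rw [Finset.card_le_one]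
    intro p hp q hq
    simp only [Finset.mem_filter, Finset.mem_univ, true_and] at hp hq
    have key : ∀ r : Fin P, (∀ j ∉ 𝒱, V r j = 0) → V r k = 0 →
        supp r = 𝒱.erase k := by
      intro r h1 h2
      apply Finset.eq_of_subset_of_card_le
      · intro j hj
        refine Finset.mem_erase.mpr ⟨?_, (hPhi r 𝒱).mp h1 hj⟩
        rintro rfl
        exact hksupp r h2 hj
      · rw [Finset.card_erase_of_mem hk, hVc, hcard r]
        omega
    apply hext
    rw [key p hp.1 hp.2, key q hq.1 hq.2]
  · have swap :
        ∑ 𝒱 ∈ (((Finset.univ : Finset (Fin K)).powersetCard (t + 1)).filter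
              (fun 𝒱 => k ∈ 𝒱)),
            (Finset.univ.filter
              (fun p : Fin P => (∀ j ∉ 𝒱, V p j = 0) ∧ V p k = 0)).card
          = (Finset.univ.filter (fun p : Fin P => V p k = 0)).card := by
      have h1 : ∀ 𝒱 : Finset (Fin K),
          (Finset.univ.filter
            (fun p : Fin P => (∀ j ∉ 𝒱, V p j = 0) ∧ V p k = 0)).card
          = ∑ p : Fin P, if (∀ j ∉ 𝒱, V p j = 0) ∧ V p k = 0 then 1 else 0 := by
        intro 𝒱; rw [Finset.card_filter]
      simp only [h1]
      rw [Finset.sum_comm, Finset.card_filter]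
      apply Finset.sum_congr rfl
      intro p _
      rcases hbin p k with h0 | h0
      · -- inner sum over 𝒱 has exactly one nonzero term, 𝒱 = insert k (supp p)
        have hmem : insert k (supp p) ∈
            (((Finset.univ : Finset (Fin K)).powersetCard (t + 1)).filter
              (fun 𝒱 => k ∈ 𝒱)) := by
          simp only [Finset.mem_filter, Finset.mem_powersetCard, Finset.mem_insert,
            true_or, and_true]
          constructor
          · exact Finset.subset_univ _
          · rw [Finset.card_insert_of_notMem (hksupp p h0), hcard p]
        rw [Finset.sum_eq_single_of_mem (insert k (supp p)) hmem]
        · simp only [h0, and_true, if_pos]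
          rw [if_pos]
          intro j hj
          exact ((hPhi p _).mpr (Finset.subset_insert _ _)) j hj
        · intro 𝒱 hV hne
          simp only [Finset.mem_filter, Finset.mem_powersetCard] at hV
          rw [if_neg]
          rintro ⟨hsub, -⟩
          apply hne
          have hsub' : insert k (supp p) ⊆ 𝒱 :=
            Finset.insert_subset hV.2 ((hPhi p 𝒱).mp hsub)
          have : 𝒱 = insert k (supp p) := by
            apply (Finset.eq_of_subset_of_card_le hsub' ?_).symm
            rw [Finset.card_insert_of_notMem (hksupp p h0), hcard p, hV.1.2]
          exact this
      · rw [if_neg (by omega)]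
        apply Finset.sum_eq_zero
        intro 𝒱 _
        rw [if_neg]
        rintro ⟨-, h⟩
        omega
    rw [swap]
    set c := (Finset.univ.filter (fun p : Fin P => V p k = 0)).card with hc
    have hsum1 : c + ∑ p, V p k = P := by
      rw [hc, Finset.card_filter, ← Finset.sum_add_distrib]
      have : ∀ p : Fin P, (if V p k = 0 then 1 else 0) + V p k = 1 := by
        intro p; rcases hbin p k with h | h <;> simp [h]
      simp only [this]
      simp [Finset.card_univ]
    have h1 : K * c + K * ∑ p, V p k = K * P := by
      rw [← Nat.mul_add, hsum1]
    rw [hcol k] at h1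
    have h2 : K * P = P * t + P * L := by rw [hK]; ring
    linarith
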